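/- Let μ be a probability measure on a metric measure space satisfying the Poincaré inequality var_μ(F) ≤ K^{-1} ∫ |∇F|^2 dμ, and let W : SO(N)^E → R be a Wilson loop observable W(Q) = Tr(Q_{e_1} ⋯ Q_{e_n}) along a loop of n distinct edges in E, regarded as a function on SO(N)^E with the product bi-invariant metric. Then the gradient satisfies Σ_{e∈E} |∇_e W|^2 ≤ n(n−3)N at every point with n ≥ 4, and consequently var_μ(W/N) ≤ n(n−3)/(K N). -/

import Mathlib

open Matrix MeasureTheory

section LinftyAux
attribute [local instance] Matrix.linftyOpNormedRing Matrix.linftyOpNormedAlgebra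

lemma traceExpDeriv {N : ℕ} (A X C : Matrix (Fin N) (Fin N) ℝ) :
    HasDerivAt (fun t : ℝ => Matrix.trace (A * NormedSpace.exp (t • X) * C))
      (Matrix.trace (A * X * C)) 0 := by
  have h := hasDerivAt_exp_smul_const (𝕂 := ℝ) X (0 : ℝ)
  rw [zero_smul, NormedSpace.exp_zero, one_mul] at h
  let Lin : Matrix (Fin N) (Fin N) ℝ →ₗ[ℝ] ℝ :=
    { toFun := fun M => Matrix.trace (A * M * C)
      map_add' := by intro x y; simp [Matrix.mul_add, Matrix.add_mul]
      map_smul' := by intro c x; simp [Matrix.mul_smul, Matrix.smul_mul] }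
  exact (LinearMap.toContinuousLinearMap Lin).hasFDerivAt.comp_hasDerivAt 0 h

end LinftyAux

attribute [local instance] Matrix.normedAddCommGroup Matrix.normedSpace

lemma besselTrace {N : ℕ} {ι : Type*} [Fintype ι] [DecidableEq ι]
    (v : ι → Matrix (Fin N) (Fin N) ℝ)
    (honb : ∀ α β, Matrix.trace (v α * (v β)ᵀ) = if α = β then (1 : ℝ) else 0)
    (M : Matrix (Fin N) (Fin N) ℝ) :
    ∑ α, (Matrix.trace (v α * M)) ^ 2 ≤ Matrix.trace (M * Mᵀ) := by
  set c : ι → ℝ := fun α => Matrix.trace (v α * M) with hc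
  set S : Matrix (Fin N) (Fin N) ℝ := ∑ α, c α • v α with hS
  have hSM : Matrix.trace (S * M) = ∑ α, (c α) ^ 2 := by
    simp [hS, Matrix.sum_mul, Matrix.smul_mul, smul_eq_mul, sq, hc]
  have hSS : Matrix.trace (S * Sᵀ) = ∑ α, (c α) ^ 2 := by
    simp [hS, Matrix.transpose_sum, Matrix.transpose_smul, Matrix.sum_mul,
      Matrix.mul_sum, Matrix.smul_mul, Matrix.mul_smul, honb, smul_eq_mul,
      mul_ite, mul_one, mul_zero, Finset.sum_ite_eq', sq]
  have hMS : Matrix.trace (Mᵀ * Sᵀ) = ∑ α, (c α) ^ 2 := by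
    rw [← Matrix.transpose_mul, Matrix.trace_transpose, hSM]
  have hpos : (0 : ℝ) ≤ Matrix.trace ((Mᵀ - S) * (Mᵀ - S)ᵀ) := by
    have : Matrix.trace ((Mᵀ - S) * (Mᵀ - S)ᵀ)
        = ∑ i, ∑ j, ((Mᵀ - S) i j) ^ 2 := by
      simp [Matrix.trace, Matrix.diag, Matrix.mul_apply, Matrix.transpose_apply, sq]
    rw [this]
    positivity
  have hexp : Matrix.trace ((Mᵀ - S) * (Mᵀ - S)ᵀ)
      = Matrix.trace (M * Mᵀ) - ∑ α, (c α) ^ 2 := by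
    rw [Matrix.transpose_sub, Matrix.transpose_transpose, Matrix.sub_mul,
      Matrix.mul_sub, Matrix.mul_sub, Matrix.trace_sub, Matrix.trace_sub,
      Matrix.trace_sub, hMS, hSM, hSS, Matrix.trace_mul_comm]
    ring
  rw [hexp] at hpos
  linarith

lemma orthoMul {N : ℕ} {x y : Matrix (Fin N) (Fin N) ℝ}
    (hx : x * xᵀ = 1) (hy : y * yᵀ = 1) : (x * y) * (x * y)ᵀ = 1 := by
  rw [Matrix.transpose_mul]
  calc x * y * (yᵀ * xᵀ) = x * (y * yᵀ) * xᵀ := by noncomm_ring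
    _ = 1 := by rw [hy, mul_one, hx]

lemma orthoList {N : ℕ} :
    ∀ L : List (Matrix (Fin N) (Fin N) ℝ), (∀ x ∈ L, x * xᵀ = 1) →
      L.prod * (L.prod)ᵀ = 1 := by
  intro L
  induction L with
  | nil => simp
  | cons a L ih =>
    intro h
    rw [List.prod_cons]
    exact orthoMul (h a (by simp)) (ih fun x hx => h x (List.mem_cons_of_mem _ hx))

lemma entryContDiff {N : ℕ} {E : Type*} [Fintype E] (e : E) (i j : Fin N) :
    ContDiff ℝ (⊤ : ℕ∞) (fun Q : E → Matrix (Fin N) (Fin N) ℝ => Q e i j) := by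
  let Lin : (E → Matrix (Fin N) (Fin N) ℝ) →ₗ[ℝ] ℝ :=
    { toFun := fun Q => Q e i j
      map_add' := fun _ _ => rfl
      map_smul' := fun _ _ => rfl }
  exact (LinearMap.toContinuousLinearMap Lin).contDiff

lemma prodEntryContDiff {N : ℕ} {E : Type*} [Fintype E] :
    ∀ (g : List E) (i j : Fin N),
      ContDiff ℝ (⊤ : ℕ∞) (fun Q : E → Matrix (Fin N) (Fin N) ℝ => ((g.map Q).prod) i j)
  | [], i, j => by
    simpa using (contDiff_const (c := ((1 : Matrix (Fin N) (Fin N) ℝ)) i j))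
  | (e :: g), i, j => by
    have heq : (fun Q : E → Matrix (Fin N) (Fin N) ℝ => (((e :: g).map Q).prod) i j)
        = fun Q => ∑ k, Q e i k * ((g.map Q).prod) k j := by
      funext Q
      rw [List.map_cons, List.prod_cons, Matrix.mul_apply]
    rw [heq]
    exact ContDiff.sum fun k _ => (entryContDiff e i k).mul (prodEntryContDiff g k j)

/-- Variance bound for Wilson loops from a Poincaré inequality: on `SO(N)^E`
(with an orthonormal basis `v` of `so(N)` used to express the squared gradient
along right-invariant directions), the Wilson loop `W(Q) = Tr(Q_{e₁}⋯Q_{eₙ})`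
along a loop of `n ≥ 4` distinct edges satisfies the pointwise gradient bound
`Σ_e |∇_e W|² ≤ n(n−3)N`, and if `μ` satisfies a Poincaré inequality with
constant `K` then `var_μ(W/N) ≤ n(n−3)/(KN)`. -/
theorem wilson_loop_variance_bound {N n : ℕ} (hn : 4 ≤ n)
    {E : Type*} [Fintype E] [DecidableEq E]
    (l : Fin n → E) (hl : Function.Injective l)
    (v : Fin (N * (N - 1) / 2) → Matrix (Fin N) (Fin N) ℝ)
    (hskew : ∀ α, (v α)ᵀ = -(v α))
    (honb : ∀ α β, Matrix.trace (v α * (v β)ᵀ) = if α = β then (1 : ℝ) else 0)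
    [MeasurableSpace (Matrix (Fin N) (Fin N) ℝ)]
    (μ : Measure (E → Matrix (Fin N) (Fin N) ℝ)) [IsProbabilityMeasure μ]
    (hμsupp : ∀ᵐ Q ∂μ, ∀ e, Q e * (Q e)ᵀ = 1 ∧ (Q e).det = 1)
    (K : ℝ) (hK : 0 < K)
    (W : (E → Matrix (Fin N) (Fin N) ℝ) → ℝ)
    (hW : ∀ Q, W Q = Matrix.trace (((List.finRange n).map fun i => Q (l i)).prod))
    (gradSq : ((E → Matrix (Fin N) (Fin N) ℝ) → ℝ) →
      (E → Matrix (Fin N) (Fin N) ℝ) → ℝ)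
    (hgradSq : ∀ F Q, gradSq F Q = ∑ e, ∑ α,
      (deriv (fun t : ℝ =>
        F (Function.update Q e (NormedSpace.exp (t • v α) * Q e))) 0) ^ 2)
    (hPoin : ∀ F : (E → Matrix (Fin N) (Fin N) ℝ) → ℝ, ContDiff ℝ (⊤ : ℕ∞) F →
      (∫ Q, (F Q) ^ 2 ∂μ) - (∫ Q, F Q ∂μ) ^ 2 ≤ K⁻¹ * ∫ Q, gradSq F Q ∂μ) :
    (∀ Q : E → Matrix (Fin N) (Fin N) ℝ,
        (∀ e, Q e * (Q e)ᵀ = 1 ∧ (Q e).det = 1) →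
        gradSq W Q ≤ n * ((n : ℝ) - 3) * N) ∧
    (∫ Q, (W Q / N) ^ 2 ∂μ) - (∫ Q, W Q / N ∂μ) ^ 2
        ≤ n * ((n : ℝ) - 3) / (K * N) := by
  classical
  -- Part 1 : the pointwise gradient bound
  have main : ∀ Q : E → Matrix (Fin N) (Fin N) ℝ,
      (∀ e, Q e * (Q e)ᵀ = 1 ∧ (Q e).det = 1) →
      gradSq W Q ≤ n * ((n : ℝ) - 3) * N := by
    intro Q hQ
    rw [hgradSq]
    have hedge : ∀ e : E, (∑ α, (deriv (fun t : ℝ =>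
        W (Function.update Q e (NormedSpace.exp (t • v α) * Q e))) 0) ^ 2)
        ≤ if e ∈ Set.range l then (N : ℝ) else 0 := by
      intro e
      by_cases he : e ∈ Set.range l
      · rw [if_pos he]
        obtain ⟨i₀, rfl⟩ := he
        -- split the loop at i₀
        obtain ⟨L₁, L₂, hsplit⟩ := List.append_of_mem (List.mem_finRange i₀)
        have hnd := List.nodup_finRange n
        rw [hsplit] at hnd
        have hi₁ : i₀ ∉ L₁ := fun h =>
          (List.disjoint_of_nodup_append hnd) h List.mem_cons_self
        have hi₂ : i₀ ∉ L₂ := by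
          have := (List.nodup_append.mp hnd).2.1
          exact (List.nodup_cons.mp this).1
        set A : Matrix (Fin N) (Fin N) ℝ := (L₁.map fun i => Q (l i)).prod with hA
        set B : Matrix (Fin N) (Fin N) ℝ := (L₂.map fun i => Q (l i)).prod with hB
        have hprod : ∀ P : Matrix (Fin N) (Fin N) ℝ,
            ((List.finRange n).map fun i => Function.update Q (l i₀) P (l i)).prod
              = A * (P * B) := by
          intro P
          rw [hsplit, List.map_append, List.prod_append, List.map_cons,
            List.prod_cons]
          congr 1
          · rw [hA]
            congr 1
            apply List.map_congr_left
            intro i hi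
            exact Function.update_of_ne (fun h : l i = l i₀ => hi₁ (hl h ▸ hi)) _ _
          · congr 1
            · exact Function.update_self _ _ _
            · rw [hB]
              congr 1
              apply List.map_congr_left
              intro i hi
              exact Function.update_of_ne (fun h : l i = l i₀ => hi₂ (hl h ▸ hi)) _ _
        have hder : ∀ α, HasDerivAt (fun t : ℝ =>
            W (Function.update Q (l i₀) (NormedSpace.exp (t • v α) * Q (l i₀))))
            (Matrix.trace (A * v α * (Q (l i₀) * B))) 0 := by
          intro α
          have hfun : (fun t : ℝ =>
              W (Function.update Q (l i₀) (NormedSpace.exp (t • v α) * Q (l i₀))))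
              = fun t : ℝ => Matrix.trace
                  (A * NormedSpace.exp (t • v α) * (Q (l i₀) * B)) := by
            funext t
            rw [hW, hprod]
            simp only [mul_assoc]
          rw [hfun]
          exact traceExpDeriv A (v α) (Q (l i₀) * B)
        have hrw : ∀ α, Matrix.trace (A * v α * (Q (l i₀) * B))
            = Matrix.trace (v α * (Q (l i₀) * B * A)) := by
          intro α
          rw [Matrix.trace_mul_comm, ← mul_assoc, Matrix.trace_mul_comm]
        have hsum : (∑ α, (deriv (fun t : ℝ =>
            W (Function.update Q (l i₀) (NormedSpace.exp (t • v α) * Q (l i₀)))) 0) ^ 2)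
            = ∑ α, (Matrix.trace (v α * (Q (l i₀) * B * A))) ^ 2 := by
          apply Finset.sum_congr rfl
          intro α _
          rw [(hder α).deriv, hrw]
        rw [hsum]
        have hMA : A * Aᵀ = 1 := by
          apply orthoList
          intro x hx
          obtain ⟨i, _, rfl⟩ := List.mem_map.mp hx
          exact (hQ (l i)).1
        have hMB : B * Bᵀ = 1 := by
          apply orthoList
          intro x hx
          obtain ⟨i, _, rfl⟩ := List.mem_map.mp hx
          exact (hQ (l i)).1
        have hM : (Q (l i₀) * B * A) * (Q (l i₀) * B * A)ᵀ = 1 :=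
          orthoMul (orthoMul (hQ (l i₀)).1 hMB) hMA
        calc ∑ α, (Matrix.trace (v α * (Q (l i₀) * B * A))) ^ 2
            ≤ Matrix.trace ((Q (l i₀) * B * A) * (Q (l i₀) * B * A)ᵀ) :=
              besselTrace v honb _
          _ = (N : ℝ) := by rw [hM]; simp [Matrix.trace_one]
      · rw [if_neg he]
        apply le_of_eq
        apply Finset.sum_eq_zero
        intro α _
        have hfun : (fun t : ℝ =>
            W (Function.update Q e (NormedSpace.exp (t • v α) * Q e)))
            = fun _ : ℝ => W Q := by
          funext t
          rw [hW, hW]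
          congr 1
          congr 1
          apply List.map_congr_left
          intro i _
          exact Function.update_of_ne (fun h => he ⟨i, h⟩) _ _
        rw [hfun, deriv_const]
        norm_num
    calc (∑ e, ∑ α, (deriv (fun t : ℝ =>
        W (Function.update Q e (NormedSpace.exp (t • v α) * Q e))) 0) ^ 2)
        ≤ ∑ e, (if e ∈ Set.range l then (N : ℝ) else 0) :=
          Finset.sum_le_sum fun e _ => hedge e
      _ = ∑ e ∈ Finset.univ.filter (· ∈ Set.range l), (N : ℝ) := by
          rw [Finset.sum_filter]
      _ = (Finset.univ.filter (· ∈ Set.range l)).card * N := by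
          rw [Finset.sum_const, nsmul_eq_mul]
      _ = n * N := by
          congr 2
          have : Finset.univ.filter (· ∈ Set.range l) = Finset.image l Finset.univ := by
            ext e
            simp [Set.mem_range, Finset.mem_image]
          rw [this, Finset.card_image_of_injective _ hl, Finset.card_univ,
            Fintype.card_fin]
      _ ≤ n * ((n : ℝ) - 3) * N := by
          have hn' : (4 : ℝ) ≤ (n : ℝ) := by exact_mod_cast hn
          have hN' : (0 : ℝ) ≤ (N : ℝ) := Nat.cast_nonneg N
          have hkey : (0 : ℝ) ≤ (n : ℝ) * (N : ℝ) * ((n : ℝ) - 4) :=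
            mul_nonneg (mul_nonneg (by linarith) hN') (by linarith)
          nlinarith [hkey]
  refine ⟨main, ?_⟩
  -- Part 2 : variance bound
  by_cases hN0 : N = 0
  · subst hN0
    simp
  have hNpos : (0 : ℝ) < (N : ℝ) := by
    exact_mod_cast Nat.pos_of_ne_zero hN0
  -- smoothness of W / N
  have hWsmooth : ContDiff ℝ (⊤ : ℕ∞) W := by
    have hWf : W = fun Q => ∑ i, ((((List.finRange n).map l).map Q).prod) i i := by
      funext Q
      rw [hW, List.map_map]
      simp [Matrix.trace, Matrix.diag, Function.comp_def]
    rw [hWf]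
    exact ContDiff.sum fun i _ => prodEntryContDiff _ i i
  have hFsmooth : ContDiff ℝ (⊤ : ℕ∞) (fun Q => W Q / (N : ℝ)) := hWsmooth.div_const _
  have hpoin := hPoin (fun Q => W Q / (N : ℝ)) hFsmooth
  -- bound the integral of the gradient
  have hFW : ∀ Q, gradSq (fun Q => W Q / (N : ℝ)) Q = gradSq W Q / (N : ℝ) ^ 2 := by
    intro Q
    rw [hgradSq, hgradSq, Finset.sum_div]
    apply Finset.sum_congr rfl
    intro e _
    rw [Finset.sum_div]
    apply Finset.sum_congr rfl
    intro α _
    rw [deriv_div_const, div_pow]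
  have hbound : ∀ᵐ Q ∂μ, gradSq (fun Q => W Q / (N : ℝ)) Q
      ≤ n * ((n : ℝ) - 3) / N := by
    filter_upwards [hμsupp] with Q hQ
    rw [hFW]
    have h1 := main Q hQ
    have h2 : n * ((n : ℝ) - 3) * N / (N : ℝ) ^ 2 = n * ((n : ℝ) - 3) / N := by
      field_simp
    calc gradSq W Q / (N : ℝ) ^ 2 ≤ n * ((n : ℝ) - 3) * N / (N : ℝ) ^ 2 := by
          gcongr
      _ = n * ((n : ℝ) - 3) / N := h2
  have hRHSnn : (0 : ℝ) ≤ n * ((n : ℝ) - 3) / N := by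
    have hn' : (4 : ℝ) ≤ (n : ℝ) := by exact_mod_cast hn
    have hnum : (0 : ℝ) ≤ (n : ℝ) * ((n : ℝ) - 3) :=
      mul_nonneg (by linarith) (by linarith)
    exact div_nonneg hnum hNpos.le
  have hint : ∫ Q, gradSq (fun Q => W Q / (N : ℝ)) Q ∂μ ≤ n * ((n : ℝ) - 3) / N := by
    by_cases hi : Integrable (fun Q => gradSq (fun Q => W Q / (N : ℝ)) Q) μ
    · calc ∫ Q, gradSq (fun Q => W Q / (N : ℝ)) Q ∂μ
          ≤ ∫ _, n * ((n : ℝ) - 3) / N ∂μ :=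
            integral_mono_ae hi (integrable_const _) hbound
        _ = n * ((n : ℝ) - 3) / N := by
            rw [integral_const, probReal_univ, one_smul]
    · rw [integral_undef hi]
      exact hRHSnn
  calc (∫ Q, (W Q / N) ^ 2 ∂μ) - (∫ Q, W Q / N ∂μ) ^ 2
      ≤ K⁻¹ * ∫ Q, gradSq (fun Q => W Q / (N : ℝ)) Q ∂μ := hpoin
    _ ≤ K⁻¹ * (n * ((n : ℝ) - 3) / N) := by
        apply mul_le_mul_of_nonneg_left hint (inv_nonneg.mpr hK.le)
    _ = n * ((n : ℝ) - 3) / (K * N) := by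
        field_simp
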